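/- For polynomials A, B of degrees n, m with simple, pairwise distinct roots α_k, β_l and leading coefficients a₀, b₀, taking determinants in the Vandermonde factorization of the Sylvester matrix recovers the resultant: det(S_{a,b}) = a₀^m b₀^n ∏_{k,l}(β_l − α_k). -/

import Mathlib

open Matrix Finset


lemma aux_det_rev {k : ℕ} (v : Fin k → ℂ) :
    (Matrix.of fun i j : Fin k => v i ^ (k - 1 - (j : ℕ))).det
      = (Matrix.vandermonde (v ∘ Fin.rev)).det := by
  rw [← Matrix.det_submatrix_equiv_self Fin.revPerm (Matrix.vandermonde (v ∘ Fin.rev))]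
  congr 1
  ext i j
  simp only [Matrix.submatrix_apply, Matrix.vandermonde_apply, Function.comp_apply,
    Fin.revPerm_apply, Fin.rev_rev, Matrix.of_apply]
  congr 1
  rw [Fin.val_rev]
  omega

lemma aux_ioi_ite {r : ℕ} (h : Fin r → Fin r → ℂ) (i : Fin r) :
    (∏ j ∈ Finset.Ioi i, h i j) = ∏ j, if i < j then h i j else 1 := by
  rw [← Finset.prod_filter, Finset.filter_lt_eq_Ioi]

lemma aux_prod_split (p q : ℕ) (f : Fin (p+q) → Fin (p+q) → ℂ) :
    (∏ i, ∏ j ∈ Finset.Ioi i, f i j)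
      = ((∏ i : Fin p, ∏ j ∈ Finset.Ioi i, f (Fin.castAdd q i) (Fin.castAdd q j))
        * (∏ i : Fin q, ∏ j ∈ Finset.Ioi i, f (Fin.natAdd p i) (Fin.natAdd p j)))
        * ∏ i : Fin p, ∏ j : Fin q, f (Fin.castAdd q i) (Fin.natAdd p j) := by
  have inner : ∀ x : Fin (p+q), (∏ j ∈ Finset.Ioi x, f x j)
      = (∏ j : Fin p, if x < Fin.castAdd q j then f x (Fin.castAdd q j) else 1)
        * ∏ j : Fin q, if x < Fin.natAdd p j then f x (Fin.natAdd p j) else 1 := by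
    intro x
    rw [aux_ioi_ite,
      ← Equiv.prod_comp finSumFinEquiv (fun j => if x < j then f x j else 1),
      Fintype.prod_sum_type]
    simp
    rfl
  simp_rw [inner]
  rw [Finset.prod_mul_distrib, Fin.prod_univ_add, Fin.prod_univ_add]
  have c1 : ∀ (i j : Fin p), (Fin.castAdd q i < Fin.castAdd q j) ↔ i < j := by
    intro i j
    simp only [Fin.lt_def, Fin.coe_castAdd]
  have c2 : ∀ (i : Fin p) (j : Fin q), (Fin.castAdd q i < Fin.natAdd p j) := by
    intro i j
    simp only [Fin.lt_def, Fin.coe_castAdd, Fin.coe_natAdd]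
    have := i.isLt; omega
  have c3 : ∀ (i : Fin q) (j : Fin p), ¬ (Fin.natAdd p i < Fin.castAdd q j) := by
    intro i j
    simp only [Fin.lt_def, Fin.coe_castAdd, Fin.coe_natAdd]
    have := j.isLt; omega
  have c4 : ∀ (i j : Fin q), (Fin.natAdd p i < Fin.natAdd p j) ↔ i < j := by
    intro i j
    simp only [Fin.lt_def, Fin.coe_natAdd, Nat.add_lt_add_iff_left]
  simp_rw [c2, if_true]
  have e3 : (∏ x : Fin q, ∏ y : Fin p,
      if Fin.natAdd p x < Fin.castAdd q y then f (Fin.natAdd p x) (Fin.castAdd q y) else 1) = 1 :=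
    Finset.prod_eq_one fun i _ => Finset.prod_eq_one fun j _ => if_neg (c3 i j)
  rw [e3, mul_one]
  have e1 : ∀ i : Fin p, (∏ j : Fin p, if Fin.castAdd q i < Fin.castAdd q j
      then f (Fin.castAdd q i) (Fin.castAdd q j) else 1)
      = ∏ j ∈ Finset.Ioi i, f (Fin.castAdd q i) (Fin.castAdd q j) := by
    intro i
    rw [aux_ioi_ite (fun a b => f (Fin.castAdd q a) (Fin.castAdd q b)) i]
    exact Finset.prod_congr rfl fun j _ => by simp only [c1]
  have e4 : ∀ i : Fin q, (∏ j : Fin q, if Fin.natAdd p i < Fin.natAdd p j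
      then f (Fin.natAdd p i) (Fin.natAdd p j) else 1)
      = ∏ j ∈ Finset.Ioi i, f (Fin.natAdd p i) (Fin.natAdd p j) := by
    intro i
    rw [aux_ioi_ite (fun a b => f (Fin.natAdd p a) (Fin.natAdd p b)) i]
    exact Finset.prod_congr rfl fun j _ => by simp only [c4]
  simp_rw [e1, e4]
  ring

lemma aux_conv_sum (N d s : ℕ) (hs : s + d < N) (c : Fin (d+1) → ℂ) (z : ℂ) :
    (∑ k ∈ Finset.range N,
      if h : s ≤ k ∧ k - s ≤ d then c ⟨k - s, by omega⟩ * z ^ (N - 1 - k) else 0)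
      = (∑ t : Fin (d+1), c t * z ^ (d - (t:ℕ))) * z ^ (N - 1 - s - d) := by
  rw [← Finset.sum_subset ((fun x hx => by
      simp only [Finset.mem_Ico] at hx
      simp only [Finset.mem_range]
      omega) : Finset.Ico s (s + d + 1) ⊆ Finset.range N)]
  · rw [Finset.sum_Ico_eq_sum_range]
    have hd : s + d + 1 - s = d + 1 := by omega
    rw [hd]
    rw [Finset.sum_mul]
    rw [← Fin.sum_univ_eq_sum_range (fun k =>
      (if h : s ≤ s + k ∧ s + k - s ≤ d then c ⟨s + k - s, by omega⟩ * z ^ (N - 1 - (s + k)) else 0))]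
    apply Finset.sum_congr rfl
    intro t _
    rw [dif_pos ⟨by omega, by omega⟩]
    have h1 : (⟨s + (t:ℕ) - s, by omega⟩ : Fin (d+1)) = t := by
      apply Fin.ext; simp
    rw [h1, mul_assoc, ← pow_add]
    congr 2
    have := t.isLt
    omega
  · intro k hk hk2
    rw [dif_neg]
    simp only [Finset.mem_Ico] at hk2
    simp only [Finset.mem_range] at hk
    omega

open Fin.NatCast in
lemma aux_rot (N : ℕ) (k : ℕ) : ∀ j : Fin (N+1), ((finRotate (N+1))^k) j = j + (k : Fin (N+1)) := by
  induction k with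
  | zero => intro j; simp
  | succ k ih =>
    intro j
    rw [pow_succ, Equiv.Perm.mul_apply, finRotate_succ_apply, ih, Nat.cast_add, Nat.cast_one,
      add_assoc, add_comm (1 : Fin (N+1)) (k : Fin (N+1))]

open Fin.NatCast in
lemma aux_rot_val (N k : ℕ) (hN : 0 < N) (j : Fin N) :
    (((finRotate N)^k) j : ℕ) = ((j : ℕ) + k) % N := by
  obtain ⟨N', rfl⟩ : ∃ N', N = N' + 1 := ⟨N - 1, by omega⟩
  rw [aux_rot, Fin.add_def, Fin.val_natCast, Nat.add_mod j.val k]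
  simp [Nat.mod_mod_of_dvd]

lemma aux_sign_rot (N k : ℕ) (hN : 2 ≤ N) :
    Equiv.Perm.sign ((finRotate N)^k) = (-1 : ℤˣ)^((N-1) * k) := by
  obtain ⟨N', rfl⟩ : ∃ N', N = N' + 2 := ⟨N - 2, by omega⟩
  rw [map_pow, sign_finRotate, ← pow_mul]

lemma aux_negprod (k : ℕ) (f : Fin k → ℂ) : (∏ i, -f i) = (-1)^k * ∏ i, f i := by
  calc (∏ i, -f i) = ∏ i, ((-1) * f i) := by simp
  _ = (∏ _i : Fin k, (-1 : ℂ)) * ∏ i, f i := Finset.prod_mul_distrib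
  _ = (-1)^k * ∏ i, f i := by rw [Finset.prod_const, Finset.card_univ, Fintype.card_fin]

/-- The `(n+m) × (n+m)` Sylvester matrix of coefficient vectors `a ∈ ℂ^{n+1}`,
`b ∈ ℂ^{m+1}` (descending order, `a 0` and `b 0` leading): its first `n` columns
are down-shifts of `b` and its last `m` columns are down-shifts of `a`. -/
def sylvester (n m : ℕ) (a : Fin (n + 1) → ℂ) (b : Fin (m + 1) → ℂ) :
    Matrix (Fin (n + m)) (Fin (n + m)) ℂ :=
  Matrix.of fun i j =>
    if hj : (j : ℕ) < n then
      if hb : (j : ℕ) ≤ (i : ℕ) ∧ (i : ℕ) - (j : ℕ) ≤ m then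
        b ⟨(i : ℕ) - (j : ℕ), by omega⟩
      else 0
    else
      if ha : (j : ℕ) - n ≤ (i : ℕ) ∧ (i : ℕ) - ((j : ℕ) - n) ≤ n then
        a ⟨(i : ℕ) - ((j : ℕ) - n), by omega⟩
      else 0

/-- The combined node vector `ζ = (β₁,…,β_m, α₁,…,α_n)`. -/
def combinedNodes (n m : ℕ) (α : Fin n → ℂ) (β : Fin m → ℂ) : Fin (n + m) → ℂ :=
  fun i => if h : (i : ℕ) < m then β ⟨i, h⟩ else α ⟨(i : ℕ) - m, by omega⟩

/-- Taking determinants in the Vandermonde factorization of the Sylvester matrix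
recovers the resultant: if all `n + m` roots of `A(z) = a₀ ∏ (z − α_k)` and
`B(z) = b₀ ∏ (z − β_l)` are pairwise distinct, then the Vandermonde determinant of
the combined roots is nonzero, the determinant identity
`det(S_{a,b}) · det(V_ζ) = a₀^m b₀^n ∏_{k,l}(β_l − α_k) · det(V_ζ)` holds, and
consequently `det(S_{a,b}) = a₀^m b₀^n ∏_{k,l}(β_l − α_k)`. -/
theorem sylvester_det_via_vandermonde (n m : ℕ) (hn : 1 ≤ n) (hm : 1 ≤ m)
    (a : Fin (n + 1) → ℂ) (b : Fin (m + 1) → ℂ)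
    (α : Fin n → ℂ) (β : Fin m → ℂ)
    (ha0 : a 0 ≠ 0) (hb0 : b 0 ≠ 0)
    (hA : ∀ z : ℂ, ∑ k : Fin (n + 1), a k * z ^ (n - (k : ℕ)) = a 0 * ∏ j, (z - α j))
    (hB : ∀ z : ℂ, ∑ l : Fin (m + 1), b l * z ^ (m - (l : ℕ)) = b 0 * ∏ j, (z - β j))
    (hdist : Function.Injective (combinedNodes n m α β)) :
    (Matrix.vandermonde (combinedNodes n m α β)).det ≠ 0
    ∧ (sylvester n m a b).det * (Matrix.vandermonde (combinedNodes n m α β)).det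
        = ((a 0) ^ m * (b 0) ^ n * ∏ k : Fin n, ∏ l : Fin m, (β l - α k))
          * (Matrix.vandermonde (combinedNodes n m α β)).det
    ∧ (sylvester n m a b).det
        = (a 0) ^ m * (b 0) ^ n * ∏ k : Fin n, ∏ l : Fin m, (β l - α k) := by
  classical
  haveI : NeZero (n + m) := ⟨by omega⟩
  set ζ : Fin (n + m) → ℂ := combinedNodes n m α β with hζdef
  set S : Matrix (Fin (n+m)) (Fin (n+m)) ℂ := sylvester n m a b with hSdef
  set Vr : Matrix (Fin (n+m)) (Fin (n+m)) ℂ :=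
    Matrix.of fun i j : Fin (n+m) => ζ i ^ (n + m - 1 - (j : ℕ)) with hVrdef
  set σ : Equiv.Perm (Fin (n+m)) := (finRotate (n+m))^n with hσdef
  set Pbig : ℂ := ∏ k : Fin n, ∏ l : Fin m, (β l - α k) with hPdef
  set DVα : ℂ := (Matrix.vandermonde (α ∘ Fin.rev)).det with hDVαdef
  set DVβ : ℂ := (Matrix.vandermonde (β ∘ Fin.rev)).det with hDVβdef
  -- node values
  have hζ1 : ∀ i : Fin (n+m), (hi : (i:ℕ) < m) → ζ i = β ⟨i, hi⟩ := by
    intro i hi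
    rw [hζdef]
    unfold combinedNodes
    rw [dif_pos hi]
  have hζ2 : ∀ i : Fin (n+m), (hi : m ≤ (i:ℕ)) → ζ i = α ⟨(i:ℕ) - m, by omega⟩ := by
    intro i hi
    rw [hζdef]
    unfold combinedNodes
    rw [dif_neg (by omega)]
  -- injectivity consequences
  have hβinj : Function.Injective β := by
    intro l1 l2 h
    have e1 : ζ ⟨l1, by omega⟩ = β l1 := by rw [hζ1 _ l1.isLt]
    have e2 : ζ ⟨l2, by omega⟩ = β l2 := by rw [hζ1 _ l2.isLt]
    have := hdist (a₁ := ⟨l1, by omega⟩) (a₂ := ⟨l2, by omega⟩) (by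
      rw [e1, e2]; exact h)
    apply Fin.ext
    exact congrArg Fin.val this |>.trans rfl
  have hαinj : Function.Injective α := by
    intro k1 k2 h
    have e1 : ζ ⟨m + k1, by omega⟩ = α k1 := by
      rw [hζ2 _ (by simp)]
      congr 1
      apply Fin.ext
      simp
    have e2 : ζ ⟨m + k2, by omega⟩ = α k2 := by
      rw [hζ2 _ (by simp)]
      congr 1
      apply Fin.ext
      simp
    have := hdist (a₁ := ⟨m + k1, by omega⟩) (a₂ := ⟨m + k2, by omega⟩) (by
      rw [e1, e2]; exact h)
    have := congrArg Fin.val this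
    simp only at this
    apply Fin.ext
    omega
  have hβα : ∀ (k : Fin n) (l : Fin m), β l - α k ≠ 0 := by
    intro k l
    rw [sub_ne_zero]
    intro h
    have e1 : ζ ⟨l, by omega⟩ = β l := by rw [hζ1 _ l.isLt]
    have e2 : ζ ⟨m + k, by omega⟩ = α k := by
      rw [hζ2 _ (by simp)]
      congr 1
      apply Fin.ext
      simp
    have := hdist (a₁ := ⟨l, by omega⟩) (a₂ := ⟨m + k, by omega⟩) (by
      rw [e1, e2]; exact h)
    have := congrArg Fin.val this
    simp only at this
    omega
  have hPne : Pbig ≠ 0 := by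
    rw [hPdef]
    rw [Finset.prod_ne_zero_iff]
    intro k _
    rw [Finset.prod_ne_zero_iff]
    intro l _
    exact hβα k l
  have hDVαne : DVα ≠ 0 :=
    Matrix.det_vandermonde_ne_zero_iff.mpr (hαinj.comp Fin.rev_injective)
  have hDVβne : DVβ ≠ 0 :=
    Matrix.det_vandermonde_ne_zero_iff.mpr (hβinj.comp Fin.rev_injective)
  -- column computations
  have hcol1 : ∀ (i j : Fin (n+m)), (j:ℕ) < n →
      (Vr * S) i j = (b 0 * ∏ l, (ζ i - β l)) * ζ i ^ (n - 1 - (j:ℕ)) := by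
    intro i j hj
    have hstep : ∀ k : Fin (n+m), Vr i k * S k j =
        (if h : (j:ℕ) ≤ (k:ℕ) ∧ (k:ℕ) - (j:ℕ) ≤ m then
          b ⟨(k:ℕ) - (j:ℕ), by omega⟩ * ζ i ^ (n + m - 1 - (k:ℕ)) else 0) := by
      intro k
      rw [hVrdef, hSdef]
      show ζ i ^ (n + m - 1 - (k:ℕ)) * sylvester n m a b k j = _
      unfold sylvester
      rw [Matrix.of_apply, dif_pos hj]
      by_cases h : (j:ℕ) ≤ (k:ℕ) ∧ (k:ℕ) - (j:ℕ) ≤ m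
      · rw [dif_pos h, dif_pos h]; ring
      · rw [dif_neg h, dif_neg h, mul_zero]
    have hsum : (Vr * S) i j = ∑ k ∈ Finset.range (n+m),
        (if h : (j:ℕ) ≤ k ∧ k - (j:ℕ) ≤ m then
          b ⟨k - (j:ℕ), by omega⟩ * ζ i ^ (n + m - 1 - k) else 0) := by
      rw [Matrix.mul_apply, ← Fin.sum_univ_eq_sum_range]
      exact Finset.sum_congr rfl fun k _ => hstep k
    rw [hsum, aux_conv_sum (n+m) m (j:ℕ) (by omega) b (ζ i), hB (ζ i)]
    congr 2
    omega
  have hcol2 : ∀ (i j : Fin (n+m)), n ≤ (j:ℕ) →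
      (Vr * S) i j = (a 0 * ∏ k, (ζ i - α k)) * ζ i ^ (m - 1 - ((j:ℕ) - n)) := by
    intro i j hj
    have hstep : ∀ k : Fin (n+m), Vr i k * S k j =
        (if h : (j:ℕ) - n ≤ (k:ℕ) ∧ (k:ℕ) - ((j:ℕ) - n) ≤ n then
          a ⟨(k:ℕ) - ((j:ℕ) - n), by omega⟩ * ζ i ^ (n + m - 1 - (k:ℕ)) else 0) := by
      intro k
      rw [hVrdef, hSdef]
      show ζ i ^ (n + m - 1 - (k:ℕ)) * sylvester n m a b k j = _
      unfold sylvester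
      rw [Matrix.of_apply, dif_neg (by omega)]
      by_cases h : (j:ℕ) - n ≤ (k:ℕ) ∧ (k:ℕ) - ((j:ℕ) - n) ≤ n
      · rw [dif_pos h, dif_pos h]; ring
      · rw [dif_neg h, dif_neg h, mul_zero]
    have hsum : (Vr * S) i j = ∑ k ∈ Finset.range (n+m),
        (if h : (j:ℕ) - n ≤ k ∧ k - ((j:ℕ) - n) ≤ n then
          a ⟨k - ((j:ℕ) - n), by omega⟩ * ζ i ^ (n + m - 1 - k) else 0) := by
      rw [Matrix.mul_apply, ← Fin.sum_univ_eq_sum_range]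
      exact Finset.sum_congr rfl fun k _ => hstep k
    have hjlt : (j:ℕ) - n ≤ m - 1 := by have := j.isLt; omega
    rw [hsum, aux_conv_sum (n+m) n ((j:ℕ) - n) (by omega) a (ζ i), hA (ζ i)]
    congr 2
    omega
  -- splitting of the reversed Vandermonde determinant
  have hrc : ∀ i : Fin n, ζ (Fin.rev (Fin.castAdd m i)) = α (Fin.rev i) := by
    intro i
    have hv : ((Fin.rev (Fin.castAdd m i)) : ℕ) = n + m - ((i:ℕ) + 1) := by
      rw [Fin.val_rev, Fin.coe_castAdd]
    have hi := i.isLt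
    rw [hζ2 _ (by omega)]
    congr 1
    apply Fin.ext
    show ((Fin.castAdd m i).rev : ℕ) - m = ((Fin.rev i) : ℕ)
    rw [hv, Fin.val_rev]
    omega
  have hrn : ∀ j : Fin m, ζ (Fin.rev (Fin.natAdd n j)) = β (Fin.rev j) := by
    intro j
    have hv : ((Fin.rev (Fin.natAdd n j)) : ℕ) = n + m - ((n + (j:ℕ)) + 1) := by
      rw [Fin.val_rev, Fin.coe_natAdd]
    have hj := j.isLt
    rw [hζ1 _ (by omega)]
    congr 1
    apply Fin.ext
    show ((Fin.natAdd n j).rev : ℕ) = ((Fin.rev j) : ℕ)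
    rw [hv, Fin.val_rev]
    omega
  have h_detVr : Vr.det = (DVα * DVβ) * Pbig := by
    rw [hVrdef, aux_det_rev ζ, Matrix.det_vandermonde]
    simp only [Function.comp_apply]
    rw [aux_prod_split n m (fun i j => ζ (Fin.rev j) - ζ (Fin.rev i))]
    have hF1 : (∏ i : Fin n, ∏ j ∈ Finset.Ioi i,
        (ζ (Fin.rev (Fin.castAdd m j)) - ζ (Fin.rev (Fin.castAdd m i)))) = DVα := by
      rw [hDVαdef, Matrix.det_vandermonde]
      refine Finset.prod_congr rfl fun i _ => Finset.prod_congr rfl fun j _ => ?_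
      rw [hrc i, hrc j]
      simp only [Function.comp_apply]
    have hF2 : (∏ i : Fin m, ∏ j ∈ Finset.Ioi i,
        (ζ (Fin.rev (Fin.natAdd n j)) - ζ (Fin.rev (Fin.natAdd n i)))) = DVβ := by
      rw [hDVβdef, Matrix.det_vandermonde]
      refine Finset.prod_congr rfl fun i _ => Finset.prod_congr rfl fun j _ => ?_
      rw [hrn i, hrn j]
      simp only [Function.comp_apply]
    have hF3 : (∏ i : Fin n, ∏ j : Fin m,
        (ζ (Fin.rev (Fin.natAdd n j)) - ζ (Fin.rev (Fin.castAdd m i)))) = Pbig := by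
      calc (∏ i : Fin n, ∏ j : Fin m,
          (ζ (Fin.rev (Fin.natAdd n j)) - ζ (Fin.rev (Fin.castAdd m i))))
          = ∏ i : Fin n, ∏ j : Fin m, (β (Fin.rev j) - α (Fin.rev i)) :=
        Finset.prod_congr rfl fun i _ => Finset.prod_congr rfl fun j _ => by rw [hrn j, hrc i]
        _ = ∏ i : Fin n, ∏ j : Fin m, (β j - α (Fin.rev i)) :=
        Finset.prod_congr rfl fun i _ => Equiv.prod_comp Fin.revPerm (fun j => β j - α (Fin.rev i))
        _ = Pbig := by
          rw [hPdef]
          exact Equiv.prod_comp Fin.revPerm (fun i => ∏ j : Fin m, (β j - α i))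
    rw [hF1, hF2, hF3]
  -- block structure
  set B1 : Matrix (Fin m) (Fin m) ℂ :=
    Matrix.of fun l l' : Fin m => (a 0 * ∏ k, (β l - α k)) * β l ^ (m - 1 - (l':ℕ)) with hB1def
  set B2 : Matrix (Fin n) (Fin n) ℂ :=
    Matrix.of fun k k' : Fin n => (b 0 * ∏ l, (α k - β l)) * α k ^ (n - 1 - (k':ℕ)) with hB2def
  set e : (Fin m ⊕ Fin n) ≃ Fin (n+m) :=
    finSumFinEquiv.trans (finCongr (Nat.add_comm m n)) with hedef
  have hel : ∀ l : Fin m, ((e (Sum.inl l)) : ℕ) = (l:ℕ) := by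
    intro l
    simp [hedef]
  have her : ∀ k : Fin n, ((e (Sum.inr k)) : ℕ) = m + (k:ℕ) := by
    intro k
    simp [hedef]
    omega
  have hσv : ∀ j : Fin (n+m), (σ j : ℕ) = ((j:ℕ) + n) % (n+m) := by
    intro j
    rw [hσdef]
    exact aux_rot_val (n+m) n (by omega) j
  have hζel : ∀ l : Fin m, ζ (e (Sum.inl l)) = β l := by
    intro l
    rw [hζ1 _ (by rw [hel]; exact l.isLt)]
    exact congrArg β (Fin.ext (hel l))
  have hζer : ∀ k : Fin n, ζ (e (Sum.inr k)) = α k := by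
    intro k
    rw [hζ2 _ (by rw [her]; omega)]
    congr 1
    apply Fin.ext
    show ((e (Sum.inr k)) : ℕ) - m = (k : ℕ)
    rw [her]
    omega
  have hblock : ((Vr * S).submatrix id σ).submatrix e e = Matrix.fromBlocks B1 0 0 B2 := by
    ext x y
    cases x with
    | inl l =>
      cases y with
      | inl l' =>
        simp only [Matrix.submatrix_apply, id_eq, Matrix.fromBlocks_apply₁₁]
        have hcv : ((σ (e (Sum.inl l'))) : ℕ) = (l':ℕ) + n := by
          rw [hσv, hel]
          exact Nat.mod_eq_of_lt (by have := l'.isLt; omega)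
        rw [hcol2 _ _ (by omega), hζel l, hB1def]
        show (a 0 * ∏ k, (β l - α k)) * β l ^ (m - 1 - (((σ (e (Sum.inl l'))) : ℕ) - n))
          = (a 0 * ∏ k, (β l - α k)) * β l ^ (m - 1 - (l' : ℕ))
        rw [hcv]
        congr 2
        omega
      | inr k' =>
        simp only [Matrix.submatrix_apply, id_eq, Matrix.fromBlocks_apply₁₂, Matrix.zero_apply]
        have hcv : ((σ (e (Sum.inr k'))) : ℕ) = (k':ℕ) := by
          rw [hσv, her]
          have h2 : m + (k':ℕ) + n = (k':ℕ) + (n + m) := by omega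
          rw [h2, Nat.add_mod_right, Nat.mod_eq_of_lt (by have := k'.isLt; omega)]
        rw [hcol1 _ _ (by rw [hcv]; exact k'.isLt), hζel l]
        have hzero : (∏ l'' : Fin m, (β l - β l'')) = 0 :=
          Finset.prod_eq_zero (Finset.mem_univ l) (sub_self _)
        rw [hzero, mul_zero, zero_mul]
    | inr k =>
      cases y with
      | inl l' =>
        simp only [Matrix.submatrix_apply, id_eq, Matrix.fromBlocks_apply₂₁, Matrix.zero_apply]
        have hcv : ((σ (e (Sum.inl l'))) : ℕ) = (l':ℕ) + n := by
          rw [hσv, hel]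
          exact Nat.mod_eq_of_lt (by have := l'.isLt; omega)
        rw [hcol2 _ _ (by omega), hζer k]
        have hzero : (∏ k'' : Fin n, (α k - α k'')) = 0 :=
          Finset.prod_eq_zero (Finset.mem_univ k) (sub_self _)
        rw [hzero, mul_zero, zero_mul]
      | inr k' =>
        simp only [Matrix.submatrix_apply, id_eq, Matrix.fromBlocks_apply₂₂]
        have hcv : ((σ (e (Sum.inr k'))) : ℕ) = (k':ℕ) := by
          rw [hσv, her]
          have h2 : m + (k':ℕ) + n = (k':ℕ) + (n + m) := by omega
          rw [h2, Nat.add_mod_right, Nat.mod_eq_of_lt (by have := k'.isLt; omega)]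
        rw [hcol1 _ _ (by rw [hcv]; exact k'.isLt), hζer k, hB2def]
        show (b 0 * ∏ l, (α k - β l)) * α k ^ (n - 1 - ((σ (e (Sum.inr k'))) : ℕ))
          = (b 0 * ∏ l, (α k - β l)) * α k ^ (n - 1 - (k' : ℕ))
        rw [hcv]
  -- determinant chain
  have hdet1 : B1.det * B2.det = ((Equiv.Perm.sign σ : ℤ) : ℂ) * (Vr.det * S.det) := by
    rw [← Matrix.det_fromBlocks_zero₂₁ B1 0 B2, ← hblock,
      Matrix.det_submatrix_equiv_self e ((Vr * S).submatrix id σ),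
      Matrix.det_permute' σ (Vr * S), Matrix.det_mul]
  -- sign value
  have hsgnval : ((Equiv.Perm.sign σ : ℤ) : ℂ) = (-1)^(m*n) := by
    rw [hσdef, aux_sign_rot (n+m) n (by omega)]
    have hcast : ((((-1 : ℤˣ)^((n+m-1)*n) : ℤˣ) : ℤ) : ℂ) = (-1 : ℂ)^((n+m-1)*n) := by
      push_cast
      norm_num
    rw [hcast]
    have hE : Even ((n+m-1)*n + m*n) := by
      have h2 : (n+m-1)*n + m*n = (n + 2*m - 1) * n := by
        rw [← Nat.add_mul]
        congr 1
        omega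
      rw [h2, Nat.even_mul]
      rcases Nat.even_or_odd n with he | ho
      · right; exact he
      · left; obtain ⟨t, ht⟩ := ho; exact ⟨t + m, by omega⟩
    have h1 : (-1:ℂ)^((n+m-1)*n) * (-1:ℂ)^(m*n) = 1 := by
      rw [← pow_add]
      exact Even.neg_one_pow hE
    have h2 : (-1:ℂ)^(m*n) * (-1:ℂ)^(m*n) = 1 := by
      rw [← pow_add]
      exact Even.neg_one_pow ⟨m*n, by ring⟩
    calc (-1:ℂ)^((n+m-1)*n) = (-1:ℂ)^((n+m-1)*n) * ((-1:ℂ)^(m*n) * (-1:ℂ)^(m*n)) := by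
          rw [h2, mul_one]
      _ = ((-1:ℂ)^((n+m-1)*n) * (-1:ℂ)^(m*n)) * (-1:ℂ)^(m*n) := by ring
      _ = (-1:ℂ)^(m*n) := by rw [h1, one_mul]
  -- block determinants
  have hdetB1 : B1.det = (a 0 ^ m * Pbig) * DVβ := by
    rw [hB1def]
    have hform : Matrix.of (fun l l' : Fin m => (a 0 * ∏ k, (β l - α k)) * β l ^ (m-1-(l':ℕ)))
        = Matrix.of (fun l l' : Fin m => (fun l : Fin m => a 0 * ∏ k, (β l - α k)) l
            * (Matrix.of fun l l' : Fin m => β l ^ (m-1-(l':ℕ))) l l') := rfl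
    rw [hform, Matrix.det_mul_column, aux_det_rev β, Finset.prod_mul_distrib,
      Finset.prod_const, Finset.card_univ, Fintype.card_fin, ← hDVβdef, hPdef]
    rw [Finset.prod_comm]
  have hswapP : (∏ k : Fin n, ∏ l : Fin m, (α k - β l)) = (-1:ℂ)^(m*n) * Pbig := by
    have hneg : ∀ k : Fin n, (∏ l : Fin m, (α k - β l)) = (-1:ℂ)^m * ∏ l, (β l - α k) := by
      intro k
      rw [← aux_negprod m (fun l => β l - α k)]
      exact Finset.prod_congr rfl fun l _ => by ring
    rw [Finset.prod_congr rfl fun k _ => hneg k, Finset.prod_mul_distrib,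
      Finset.prod_const, Finset.card_univ, Fintype.card_fin, ← pow_mul, hPdef]
  have hdetB2 : B2.det = (b 0 ^ n * ((-1:ℂ)^(m*n) * Pbig)) * DVα := by
    rw [hB2def]
    have hform : Matrix.of (fun k k' : Fin n => (b 0 * ∏ l, (α k - β l)) * α k ^ (n-1-(k':ℕ)))
        = Matrix.of (fun k k' : Fin n => (fun k : Fin n => b 0 * ∏ l, (α k - β l)) k
            * (Matrix.of fun k k' : Fin n => α k ^ (n-1-(k':ℕ))) k k') := rfl
    rw [hform, Matrix.det_mul_column, aux_det_rev α, Finset.prod_mul_distrib,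
      Finset.prod_const, Finset.card_univ, Fintype.card_fin, ← hDVαdef, hswapP]
  -- final algebra
  have hfin : S.det = a 0 ^ m * b 0 ^ n * Pbig := by
    have hXne : DVα * DVβ * Pbig ≠ 0 := mul_ne_zero (mul_ne_zero hDVαne hDVβne) hPne
    apply mul_left_cancel₀ hXne
    have h0 := hdet1
    rw [hdetB1, hdetB2, hsgnval, h_detVr] at h0
    have h2 : (-1:ℂ)^(m*n) * (-1:ℂ)^(m*n) = 1 := by
      rw [← pow_add]
      exact Even.neg_one_pow ⟨m*n, by ring⟩
    linear_combination (-((-1:ℂ)^(m*n))) * h0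
      - ((DVα*DVβ*Pbig) * S.det - (DVα*DVβ*Pbig) * (a 0^m * b 0^n * Pbig)) * h2
  refine ⟨Matrix.det_vandermonde_ne_zero_iff.mpr hdist, ?_, hfin⟩
  rw [hfin]
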